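/- arXiv:2111.13207 — 3 statements merged into one kernel-verified Lean document; each statement's English description precedes it below -/
import Mathlib

section
/- Define Δ(s) = ‖u(x(s)) − U(s)‖², where u : ℝ^k → ℝ^n is C¹ satisfying Du(x)·a(x,u(x)) = c(x,u(x)), and (x(s), U(s)) solves x' = a(x, U), U' = c(x, U). If a and c are Lipschitz with constants A, B respectively and ‖Du(x(s))‖ ≤ M for all s ∈ [0, s₀], then Δ'(s) ≤ 2(AM + B) Δ(s) for all s ∈ [0, s₀]. -/
/-!
Along a characteristic, `e(s) = u(x(s)) - U(s)` has derivative
`Du(a(x,U)) - c(x,U)`. Subtracting the PDE `Du(a(x,u)) = c(x,u)` writes this as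
`Du(a(x,U) - a(x,u)) + (c(x,u) - c(x,U))`, whose norm is at most `(AM + B)‖e‖` by the Lipschitz
bounds. Hence `Δ' = 2⟪e, e'⟫ ≤ 2(AM + B)‖e‖²` by Cauchy–Schwarz.
-/

open scoped NNReal

theorem LipschitzWith.norm_sub_le_of_fst_eq {α F G : Type*} [PseudoEMetricSpace α]
    [SeminormedAddCommGroup F] [SeminormedAddCommGroup G] {K : ℝ≥0} {f : α × F → G}
    (hf : LipschitzWith K f) (p : α) (y z : F) :
    ‖f (p, y) - f (p, z)‖ ≤ K * ‖y - z‖ := by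
  simpa using (hf.comp (LipschitzWith.prodMk_left p)).norm_sub_le y z

theorem norm_map_sub_le_of_map_eq {𝕜 E F : Type*} [NontriviallyNormedField 𝕜]
    [SeminormedAddCommGroup E] [NormedSpace 𝕜 E] [SeminormedAddCommGroup F] [NormedSpace 𝕜 F]
    {a : E × F → E} {c : E × F → F} {A B : ℝ≥0} (ha : LipschitzWith A a)
    (hc : LipschitzWith B c) (L : E →L[𝕜] F) {y : E} {w : F} (hw : L (a (y, w)) = c (y, w))
    (V : F) :
    ‖L (a (y, V)) - c (y, V)‖ ≤ (A * ‖L‖ + B) * ‖w - V‖ := by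
  have hsplit : L (a (y, V)) - c (y, V) = L (a (y, V) - a (y, w)) + (c (y, w) - c (y, V)) := by
    rw [map_sub, hw]
    abel
  calc ‖L (a (y, V)) - c (y, V)‖
      ≤ ‖L‖ * ‖a (y, V) - a (y, w)‖ + ‖c (y, w) - c (y, V)‖ := by
        rw [hsplit]
        exact (norm_add_le _ _).trans (add_le_add_left (L.le_opNorm _) _)
    _ ≤ ‖L‖ * (A * ‖V - w‖) + B * ‖w - V‖ := by
        gcongr
        · exact ha.norm_sub_le_of_fst_eq y V w
        · exact hc.norm_sub_le_of_fst_eq y w V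
    _ = (A * ‖L‖ + B) * ‖w - V‖ := by
        rw [norm_sub_rev V w]
        ring

theorem moc_differential_inequality_general {k n : ℕ}
    (a : EuclideanSpace ℝ (Fin k) × EuclideanSpace ℝ (Fin n) → EuclideanSpace ℝ (Fin k))
    (c : EuclideanSpace ℝ (Fin k) × EuclideanSpace ℝ (Fin n) → EuclideanSpace ℝ (Fin n))
    (A B : NNReal) (ha : LipschitzWith A a) (hc : LipschitzWith B c)
    (u : EuclideanSpace ℝ (Fin k) → EuclideanSpace ℝ (Fin n))
    (hu : ContDiff ℝ 1 u)
    (hPDE : ∀ y, (fderiv ℝ u y) (a (y, u y)) = c (y, u y))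
    (s₀ : ℝ)
    (x : ℝ → EuclideanSpace ℝ (Fin k)) (U : ℝ → EuclideanSpace ℝ (Fin n))
    (hx' : ∀ s ∈ Set.Icc (0 : ℝ) s₀, HasDerivAt x (a (x s, U s)) s)
    (hU' : ∀ s ∈ Set.Icc (0 : ℝ) s₀, HasDerivAt U (c (x s, U s)) s)
    (M : ℝ) (hM : ∀ s ∈ Set.Icc (0 : ℝ) s₀, ‖fderiv ℝ u (x s)‖ ≤ M) :
    ∀ s ∈ Set.Icc (0 : ℝ) s₀,
      deriv (fun r => ‖u (x r) - U r‖ ^ 2) s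
        ≤ 2 * ((A : ℝ) * M + (B : ℝ)) * ‖u (x s) - U s‖ ^ 2 := by
  intro s hs
  set e := u (x s) - U s
  set v := fderiv ℝ u (x s) (a (x s, U s)) - c (x s, U s)
  have hΔ : HasDerivAt (fun r => ‖u (x r) - U r‖ ^ 2) (2 * inner ℝ e v) s :=
    (((hu.differentiable one_ne_zero _).hasFDerivAt.comp_hasDerivAt s (hx' s hs)).sub
      (hU' s hs)).norm_sq
  have hv : ‖v‖ ≤ (A * M + B) * ‖e‖ :=
    (norm_map_sub_le_of_map_eq ha hc _ (hPDE (x s)) (U s)).trans (by gcongr; exact hM s hs)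
  rw [hΔ.deriv]
  calc 2 * inner ℝ e v ≤ 2 * (‖e‖ * ‖v‖) := by gcongr; exact real_inner_le_norm e v
    _ ≤ 2 * (‖e‖ * ((A * M + B) * ‖e‖)) := by gcongr
    _ = 2 * (A * M + B) * ‖e‖ ^ 2 := by ring

/-- Key differential inequality in the proof of the method of characteristics:
Δ(s) = ‖u(x(s)) − U(s)‖² satisfies Δ'(s) ≤ 2(AM + B)Δ(s). -/
theorem moc_differential_inequality {k n : ℕ}
    (a : EuclideanSpace ℝ (Fin k) × EuclideanSpace ℝ (Fin n) → EuclideanSpace ℝ (Fin k))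
    (c : EuclideanSpace ℝ (Fin k) × EuclideanSpace ℝ (Fin n) → EuclideanSpace ℝ (Fin n))
    (A B : NNReal) (ha : LipschitzWith A a) (hc : LipschitzWith B c)
    (u : EuclideanSpace ℝ (Fin k) → EuclideanSpace ℝ (Fin n))
    (hu : ContDiff ℝ 1 u)
    (hPDE : ∀ y, (fderiv ℝ u y) (a (y, u y)) = c (y, u y))
    (s₀ : ℝ) (hs₀ : 0 ≤ s₀)
    (x : ℝ → EuclideanSpace ℝ (Fin k)) (U : ℝ → EuclideanSpace ℝ (Fin n))
    (hx' : ∀ s ∈ Set.Icc (0 : ℝ) s₀, HasDerivAt x (a (x s, U s)) s)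
    (hU' : ∀ s ∈ Set.Icc (0 : ℝ) s₀, HasDerivAt U (c (x s, U s)) s)
    (M : ℝ) (hM : ∀ s ∈ Set.Icc (0 : ℝ) s₀, ‖fderiv ℝ u (x s)‖ ≤ M) :
    ∀ s ∈ Set.Icc (0 : ℝ) s₀,
      deriv (fun r => ‖u (x r) - U r‖ ^ 2) s
        ≤ 2 * ((A : ℝ) * M + (B : ℝ)) * ‖u (x s) - U s‖ ^ 2 :=
  moc_differential_inequality_general a c A B ha hc u hu hPDE s₀ x U hx' hU' M hM
end

section
/- There is no continuous function G : ℝ₊ × ℝ → ℝ that is Lipschitz in the second argument such that the flow of the scalar ODE u'(s) = G(s, u(s)) maps u(0) = 1 to u(1) = 0 and u(0) = 0 to u(1) = 1. -/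
/-!
Solutions of a scalar ODE whose field is Lipschitz in the state cannot cross: if `u ≤ v`
initially but `u > v` at the final time, the intermediate value theorem gives a time where
`u = v`, and uniqueness of solutions then forces `u = v` from there on. Hence the flow preserves
order and cannot swap `0` and `1`.
-/

open Set
open scoped NNReal

theorem ODE_solution_eqOn_Icc_of_eq {E : Type*} [NormedAddCommGroup E] [NormedSpace ℝ E]
    {G : ℝ → E → E} {K : ℝ≥0} {u v : ℝ → E} {a b t₀ : ℝ}
    (hG : ∀ s ∈ Icc a b, LipschitzWith K (G s))
    (hu : ∀ s ∈ Icc a b, HasDerivAt u (G s (u s)) s)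
    (hv : ∀ s ∈ Icc a b, HasDerivAt v (G s (v s)) s)
    (ht₀ : t₀ ∈ Icc a b) (h : u t₀ = v t₀) :
    EqOn u v (Icc t₀ b) := by
  have hsub : Icc t₀ b ⊆ Icc a b := Icc_subset_Icc_left ht₀.1
  have hsub' : Ico t₀ b ⊆ Icc a b := Ico_subset_Icc_self.trans hsub
  exact ODE_solution_unique_of_mem_Icc_right (s := fun _ ↦ univ)
    (fun s hs ↦ (hG s (hsub' hs)).lipschitzOnWith)
    (HasDerivAt.continuousOn fun s hs ↦ hu s (hsub hs))
    (fun s hs ↦ (hu s (hsub' hs)).hasDerivWithinAt) (fun _ _ ↦ trivial)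
    (HasDerivAt.continuousOn fun s hs ↦ hv s (hsub hs))
    (fun s hs ↦ (hv s (hsub' hs)).hasDerivWithinAt) (fun _ _ ↦ trivial) h

theorem ODE_solution_le_of_le {G : ℝ → ℝ → ℝ} {K : ℝ≥0} {u v : ℝ → ℝ} {a b : ℝ}
    (hG : ∀ s ∈ Icc a b, LipschitzWith K (G s))
    (hu : ∀ s ∈ Icc a b, HasDerivAt u (G s (u s)) s)
    (hv : ∀ s ∈ Icc a b, HasDerivAt v (G s (v s)) s)
    (hab : a ≤ b) (h : u a ≤ v a) :
    u b ≤ v b := by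
  by_contra! hlt
  have hcont : ContinuousOn (fun s ↦ u s - v s) (Icc a b) :=
    HasDerivAt.continuousOn fun s hs ↦ (hu s hs).sub (hv s hs)
  obtain ⟨t₀, ht₀, hcross⟩ :=
    intermediate_value_Icc hab hcont ⟨sub_nonpos.mpr h, sub_nonneg.mpr hlt.le⟩
  have hb : u b = v b :=
    ODE_solution_eqOn_Icc_of_eq hG hu hv ht₀ (sub_eq_zero.mp hcross) ⟨ht₀.2, le_rfl⟩
  exact hlt.ne' hb

/-- There is no continuous G : ℝ₊ × ℝ → ℝ, Lipschitz in the second argument,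
whose scalar ODE flow maps u(0) = 1 to u(1) = 0 and u(0) = 0 to u(1) = 1. -/
theorem no_scalar_ode_swaps_initial_conditions :
    ¬ ∃ (G : ℝ → ℝ → ℝ) (K : NNReal),
      ContinuousOn (fun p : ℝ × ℝ => G p.1 p.2) (Set.Ici (0 : ℝ) ×ˢ Set.univ) ∧
      (∀ s ∈ Set.Ici (0 : ℝ), LipschitzWith K (G s)) ∧
      ∃ u v : ℝ → ℝ,
        (∀ s ∈ Set.Icc (0 : ℝ) 1, HasDerivAt u (G s (u s)) s) ∧
        (∀ s ∈ Set.Icc (0 : ℝ) 1, HasDerivAt v (G s (v s)) s) ∧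
        u 0 = 1 ∧ u 1 = 0 ∧ v 0 = 0 ∧ v 1 = 1 := by
  rintro ⟨G, K, -, hG, u, v, hu, hv, hu0, hu1, hv0, hv1⟩
  have hle : v 1 ≤ u 1 :=
    ODE_solution_le_of_le (fun s hs ↦ hG s hs.1) hv hu zero_le_one (by norm_num [hu0, hv0])
  norm_num [hu1, hv1] at hle
end

section
/- Let p₀ be a probability density on ℝ^n and let φ_s be the flow of du/ds = F(u) with F ∈ C¹ and all derivatives bounded. Define p_s as the pushforward density of p₀ under φ_s. Then for any u in the range of the flow, log p_s(φ_s(u)) = log p₀(u) − ∫₀^s tr(DF(φ_r(u))) dr. -/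
/-!
Differentiating the integral form `φ_s u = φ_0 u + ∫₀ˢ F (φ_r u) dr` under the integral sign shows
that the Jacobian `J_s = Dφ_s(u)` solves the variational equation `J' = DF(φ_s u) ∘ J`. By Jacobi's
formula `(det J)' = tr DF(φ_s u) · det J`, so `det J_s = exp ∫₀ˢ tr DF(φ_r u) dr` (Liouville's
formula) is positive, and taking logarithms in `p_s(φ_s u) · |det J_s| = p₀(u)` gives the claim.
-/

open Filter Topology

theorem Matrix.sum_det_updateRow_mul {n R : Type*} [Fintype n] [DecidableEq n] [CommRing R]
    (A B : Matrix n n R) :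
    ∑ i, (A.updateRow i ((B * A) i)).det = B.trace * A.det := by
  have hrow : ∀ i, (B * A) i = ∑ k, B i k • A k := fun i => by
    ext j; simp [Matrix.mul_apply, Finset.sum_apply]
  simp only [hrow, Matrix.det_updateRow_sum, smul_eq_mul, Matrix.trace, Matrix.diag,
    Finset.sum_mul]

theorem Matrix.hasDerivAt_det {n : Type*} [Fintype n] [DecidableEq n] {M : ℝ → Matrix n n ℝ}
    {M' : Matrix n n ℝ} {t : ℝ} (hM : ∀ i j, HasDerivAt (fun t => M t i j) (M' i j) t) :
    HasDerivAt (fun t => (M t).det) (∑ i, ((M t).updateRow i (M' i)).det) t := by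
  let det' : ContinuousMultilinearMap ℝ (fun _ : n => n → ℝ) ℝ :=
    { toMultilinearMap := Matrix.detRowAlternating.toMultilinearMap
      cont := continuous_id.matrix_det }
  have hrows : ∀ i, HasDerivAt (fun t => M t i) (M' i) t := fun i => hasDerivAt_pi.2 (hM i)
  have h := (HasFDerivAt.multilinear_comp det' fun i => (hrows i).hasFDerivAt).hasDerivAt
  refine h.congr_deriv ?_
  simp only [_root_.sum_apply, ContinuousLinearMap.comp_apply,
    ContinuousLinearMap.toSpanSingleton_apply, one_smul,
    ContinuousMultilinearMap.toContinuousLinearMap_apply]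
  rfl

theorem ContinuousLinearMap.hasDerivAt_det_of_hasDerivAt_comp {E : Type*}
    [NormedAddCommGroup E] [NormedSpace ℝ E] [FiniteDimensional ℝ E]
    {J : ℝ → E →L[ℝ] E} {A : E →L[ℝ] E} {t : ℝ} (hJ : HasDerivAt J (A ∘L J t) t) :
    HasDerivAt (fun t => LinearMap.det (J t : E →ₗ[ℝ] E))
      (LinearMap.trace ℝ E A * LinearMap.det (J t : E →ₗ[ℝ] E)) t := by
  let b := Module.finBasis ℝ E
  let M : (E →L[ℝ] E) →ₗ[ℝ] Matrix _ _ ℝ :=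
    (LinearMap.toMatrix b b).toLinearMap ∘ₗ ContinuousLinearMap.coeLM ℝ
  have hM : ∀ i j, HasDerivAt (fun t => M (J t) i j) (M (A ∘L J t) i j) t := fun i j =>
    (LinearMap.toContinuousLinearMap (Matrix.entryLinearMap ℝ ℝ i j ∘ₗ M)).hasFDerivAt
      |>.comp_hasDerivAt t hJ
  have hcomp : M (A ∘L J t) = M A * M (J t) := LinearMap.toMatrix_comp b b b _ _
  have hdet : ∀ f : E →L[ℝ] E, LinearMap.det (f : E →ₗ[ℝ] E) = (M f).det := fun f =>
    (LinearMap.det_toMatrix b f).symm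
  have htrace : LinearMap.trace ℝ E A = (M A).trace := LinearMap.trace_eq_matrix_trace ℝ b _
  simp only [hdet, htrace]
  simpa only [hcomp, Matrix.sum_det_updateRow_mul] using Matrix.hasDerivAt_det hM

theorem eq_exp_integral_mul_of_hasDerivAt {a D : ℝ → ℝ} (ha : Continuous a)
    (hD : ∀ t, HasDerivAt D (a t * D t) t) (s : ℝ) :
    D s = Real.exp (∫ t in (0 : ℝ)..s, a t) * D 0 := by
  set g : ℝ → ℝ := fun s => ∫ t in (0 : ℝ)..s, a t
  have hg : ∀ t, HasDerivAt g (a t) t := fun t => (ha.integral_hasStrictDerivAt 0 t).hasDerivAt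
  have hconst : ∀ t, HasDerivAt (fun t => Real.exp (-g t) * D t) 0 t := fun t =>
    (((hg t).neg.exp).mul (hD t)).congr_deriv (by ring)
  have hs := is_const_of_deriv_eq_zero (fun t => (hconst t).differentiableAt)
    (fun t => (hconst t).deriv) s 0
  simp only [g, intervalIntegral.integral_same, neg_zero, Real.exp_zero, one_mul,
    Real.exp_neg] at hs
  rw [← hs, mul_inv_cancel_left₀ (Real.exp_ne_zero _)]

theorem intervalIntegral.hasFDerivAt_integral_of_continuous_fderiv {H E : Type*}
    [NormedAddCommGroup H] [NormedSpace ℝ H] [NormedAddCommGroup E] [NormedSpace ℝ E]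
    {f : H → ℝ → E} {f' : H → ℝ → H →L[ℝ] E} (hf : ∀ x t, HasFDerivAt (f · t) (f' x t) x)
    (hf_cont : ∀ x, Continuous (f x)) (hf' : Continuous ↿f') (a b : ℝ) (x₀ : H) :
    HasFDerivAt (fun x => ∫ t in a..b, f x t) (∫ t in a..b, f' x₀ t) x₀ := by
  obtain ⟨C, hC⟩ := isCompact_uIcc.exists_bound_of_continuousOn
    (hf'.comp (Continuous.prodMk_right x₀)).continuousOn
  -- tube lemma: the bound on `‖f' x₀ t‖` over `[a, b]` persists, up to `1`, for `x` near `x₀`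
  have hnear : ∀ᶠ x in 𝓝 x₀, ∀ t ∈ Set.uIcc a b, ‖f' x t‖ < C + 1 :=
    isCompact_uIcc.eventually_forall_of_forall_eventually fun t ht =>
      hf'.norm.continuousAt.eventually_lt continuousAt_const ((hC t ht).trans_lt (lt_add_one C))
  refine hasFDerivAt_integral_of_dominated_of_fderiv_le (bound := fun _ => C + 1) hnear
    (.of_forall fun x => (hf_cont x).aestronglyMeasurable) ((hf_cont x₀).intervalIntegrable a b)
    (hf'.comp (Continuous.prodMk_right x₀)).aestronglyMeasurable ?_ intervalIntegrable_const
    (.of_forall fun t _ x _ => hf x t)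
  exact .of_forall fun t ht x hx => (hx t (Set.uIoc_subset_uIcc ht)).le

theorem hasDerivAt_fderiv_flow {E : Type*} [NormedAddCommGroup E] [NormedSpace ℝ E]
    [CompleteSpace E] {F : E → E} {φ : ℝ → E → E} (hF : ContDiff ℝ 1 F)
    (hφ : ∀ t x, HasDerivAt (fun t => φ t x) (F (φ t x)) t) (hφC1 : ContDiff ℝ 1 ↿φ)
    (x : E) (t : ℝ) :
    HasDerivAt (fun t => fderiv ℝ (φ t) x) ((fderiv ℝ F (φ t x)).comp (fderiv ℝ (φ t) x)) t := by
  have hφt : ∀ t y, HasFDerivAt (φ t) (fderiv ℝ (φ t) y) y := fun t y =>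
    ((hφC1.comp (contDiff_prodMk_right t)).differentiable one_ne_zero y).hasFDerivAt
  have hDφ : Continuous fun p : E × ℝ => fderiv ℝ (φ p.2) p.1 :=
    (ContDiff.fderiv (n := 0) (f := fun p : E × ℝ => φ p.2)
      (hφC1.comp (by fun_prop : ContDiff ℝ 1 fun q : (E × ℝ) × E => (q.1.2, q.2)))
      contDiff_fst le_rfl).continuous
  have hφc : Continuous fun p : E × ℝ => φ p.2 p.1 :=
    hφC1.continuous.comp (continuous_snd.prodMk continuous_fst)
  have hG : Continuous fun p : E × ℝ => (fderiv ℝ F (φ p.2 p.1)).comp (fderiv ℝ (φ p.2) p.1) :=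
    ((hF.continuous_fderiv one_ne_zero).comp hφc).clm_comp hDφ
  have hintegral : ∀ r, φ r = fun y => φ 0 y + ∫ τ in (0 : ℝ)..r, F (φ τ y) := fun r => by
    funext y
    rw [intervalIntegral.integral_eq_sub_of_hasDerivAt (fun τ _ => hφ τ y)
      ((hF.continuous.comp (hφc.comp (Continuous.prodMk_right y))).intervalIntegrable 0 r)]
    abel
  -- `φ` is only `C¹`, so `∂ₜ ∂ₓ φ` comes from differentiating the integral equation in `x`,
  -- not from exchanging the partial derivatives.
  have hJ : (fun t => fderiv ℝ (φ t) x) = fun t => fderiv ℝ (φ 0) x +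
      ∫ τ in (0 : ℝ)..t, (fderiv ℝ F (φ τ x)).comp (fderiv ℝ (φ τ) x) := by
    funext r
    refine (hφt r x).unique ?_
    rw [hintegral r]
    exact (hφt 0 x).add (intervalIntegral.hasFDerivAt_integral_of_continuous_fderiv
      (fun y τ => (hF.differentiable one_ne_zero _).hasFDerivAt.comp y (hφt τ y))
      (fun y => hF.continuous.comp (hφc.comp (Continuous.prodMk_right y))) hG 0 r x)
  rw [hJ]
  exact ((hG.comp (Continuous.prodMk_right x)).integral_hasStrictDerivAt 0 t).hasDerivAt
    |>.const_add _

theorem det_fderiv_flow_eq_exp_integral_trace {E : Type*} [NormedAddCommGroup E]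
    [NormedSpace ℝ E] [FiniteDimensional ℝ E] {F : E → E} {φ : ℝ → E → E}
    (hF : ContDiff ℝ 1 F) (hφ0 : φ 0 = id)
    (hφ : ∀ t x, HasDerivAt (fun t => φ t x) (F (φ t x)) t) (hφC1 : ContDiff ℝ 1 ↿φ)
    (x : E) (s : ℝ) :
    LinearMap.det (fderiv ℝ (φ s) x : E →ₗ[ℝ] E) =
      Real.exp (∫ t in (0 : ℝ)..s, LinearMap.trace ℝ E (fderiv ℝ F (φ t x) : E →ₗ[ℝ] E)) := by
  have htrace : Continuous fun f : E →L[ℝ] E => LinearMap.trace ℝ E f :=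
    LinearMap.continuous_of_finiteDimensional (LinearMap.trace ℝ E ∘ₗ ContinuousLinearMap.coeLM ℝ)
  have hφx : Continuous fun t => φ t x := hφC1.continuous.comp (Continuous.prodMk_left x)
  have hdet0 : LinearMap.det (fderiv ℝ (φ 0) x : E →ₗ[ℝ] E) = 1 := by
    simp [hφ0, fderiv_id]
  rw [eq_exp_integral_mul_of_hasDerivAt
    (htrace.comp ((hF.continuous_fderiv one_ne_zero).comp hφx))
    (fun t => ContinuousLinearMap.hasDerivAt_det_of_hasDerivAt_comp
      (hasDerivAt_fderiv_flow hF hφ hφC1 x t)) s, hdet0, mul_one]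
  rfl

theorem cnf_integrated_log_density_general {n : ℕ}
    (F : EuclideanSpace ℝ (Fin n) → EuclideanSpace ℝ (Fin n))
    (hF : ContDiff ℝ 1 F)
    (φ : ℝ → EuclideanSpace ℝ (Fin n) → EuclideanSpace ℝ (Fin n))
    (hφ0 : φ 0 = id)
    (hφ : ∀ (s : ℝ) (v : EuclideanSpace ℝ (Fin n)),
      HasDerivAt (fun r => φ r v) (F (φ s v)) s)
    (hφC1 : ContDiff ℝ 1 fun q : ℝ × EuclideanSpace ℝ (Fin n) => φ q.1 q.2)
    (p₀ : EuclideanSpace ℝ (Fin n) → ℝ) (hp₀ : ∀ v, 0 < p₀ v)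
    (p : ℝ → EuclideanSpace ℝ (Fin n) → ℝ)
    (hp : ∀ (s : ℝ) (v : EuclideanSpace ℝ (Fin n)),
      p s (φ s v) * |LinearMap.det
        (fderiv ℝ (φ s) v : EuclideanSpace ℝ (Fin n) →ₗ[ℝ] EuclideanSpace ℝ (Fin n))| = p₀ v)
    (u : EuclideanSpace ℝ (Fin n)) (s : ℝ) :
    Real.log (p s (φ s u)) = Real.log (p₀ u) -
      ∫ r in (0 : ℝ)..s, LinearMap.trace ℝ (EuclideanSpace ℝ (Fin n))
        (fderiv ℝ F (φ r u) : EuclideanSpace ℝ (Fin n) →ₗ[ℝ] EuclideanSpace ℝ (Fin n)) := by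
  have hps := hp s u
  rw [det_fderiv_flow_eq_exp_integral_trace hF hφ0 hφ hφC1 u s,
    abs_of_pos (Real.exp_pos _)] at hps
  have hpos : p s (φ s u) ≠ 0 := fun h => (hp₀ u).ne' (by rw [← hps, h, zero_mul])
  rw [← hps, Real.log_mul hpos (Real.exp_ne_zero _), Real.log_exp, add_sub_cancel_right]

/-- Integrated change-of-variables formula for continuous normalizing flows:
if φ_s is the flow of du/ds = F(u) with F ∈ C¹ with bounded derivative, and
p_s is the pushforward density of p₀ under φ_s, then
log p_s(φ_s(u)) = log p₀(u) − ∫₀ˢ tr(DF(φ_r(u))) dr. -/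
theorem cnf_integrated_log_density {n : ℕ}
    (F : EuclideanSpace ℝ (Fin n) → EuclideanSpace ℝ (Fin n))
    (hF : ContDiff ℝ 1 F)
    (hFbdd : ∃ C : ℝ, ∀ v, ‖fderiv ℝ F v‖ ≤ C)
    (φ : ℝ → EuclideanSpace ℝ (Fin n) → EuclideanSpace ℝ (Fin n))
    (hφ0 : φ 0 = id)
    (hφ : ∀ (s : ℝ) (v : EuclideanSpace ℝ (Fin n)),
      HasDerivAt (fun r => φ r v) (F (φ s v)) s)
    (hφC1 : ContDiff ℝ 1 fun q : ℝ × EuclideanSpace ℝ (Fin n) => φ q.1 q.2)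
    (p₀ : EuclideanSpace ℝ (Fin n) → ℝ) (hp₀ : ∀ v, 0 < p₀ v)
    (p : ℝ → EuclideanSpace ℝ (Fin n) → ℝ)
    (hp : ∀ (s : ℝ) (v : EuclideanSpace ℝ (Fin n)),
      p s (φ s v) * |LinearMap.det
        (fderiv ℝ (φ s) v : EuclideanSpace ℝ (Fin n) →ₗ[ℝ] EuclideanSpace ℝ (Fin n))| = p₀ v)
    (u : EuclideanSpace ℝ (Fin n)) (s : ℝ) :
    Real.log (p s (φ s u)) = Real.log (p₀ u) -
      ∫ r in (0 : ℝ)..s, LinearMap.trace ℝ (EuclideanSpace ℝ (Fin n))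
        (fderiv ℝ F (φ r u) : EuclideanSpace ℝ (Fin n) →ₗ[ℝ] EuclideanSpace ℝ (Fin n)) :=
  cnf_integrated_log_density_general F hF φ hφ0 hφ hφC1 p₀ hp₀ p hp u s
end
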